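/- arXiv:2411.17988 — 4 statements merged into one kernel-verified Lean document; each statement's English description precedes it below -/
import Mathlib

section
/- Let B and C be finite-dimensional real vector spaces and ρ : C → B a linear map. Then the set K = {f ∈ Hom(B,C) | id_B + ρ∘f is invertible}, equipped with the product f₁ * f₂ = f₁ + f₂ + f₂∘ρ∘f₁, is a group with identity element 0 and inverse Inv(f) = -f∘(id_B + ρ∘f)⁻¹. -/
/-- For finite-dimensional real vector spaces `B`, `C` and a linear map
`ρ : C → B`, the set `K = {f : B → C | id_B + ρ∘f is invertible}` with product
`f₁ * f₂ = f₁ + f₂ + f₂∘ρ∘f₁` is a group, with identity `0` and inverse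
`Inv(f) = -f ∘ (id_B + ρ∘f)⁻¹`. -/
theorem manin_fat_group {B C : Type*} [AddCommGroup B] [Module ℝ B]
    [AddCommGroup C] [Module ℝ C] [FiniteDimensional ℝ B] [FiniteDimensional ℝ C]
    (ρ : C →ₗ[ℝ] B)
    (K : (B →ₗ[ℝ] C) → Prop)
    (hK : ∀ f, K f ↔ IsUnit ((1 : Module.End ℝ B) + ρ ∘ₗ f))
    (mul : (B →ₗ[ℝ] C) → (B →ₗ[ℝ] C) → (B →ₗ[ℝ] C))
    (hmul : ∀ f₁ f₂, mul f₁ f₂ = f₁ + f₂ + f₂ ∘ₗ (ρ ∘ₗ f₁))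
    (inv : (B →ₗ[ℝ] C) → (B →ₗ[ℝ] C))
    (hinv : ∀ f, inv f = -(f ∘ₗ Ring.inverse ((1 : Module.End ℝ B) + ρ ∘ₗ f))) :
    (∀ f₁ f₂, K f₁ → K f₂ → K (mul f₁ f₂)) ∧
    (∀ f₁ f₂ f₃, mul (mul f₁ f₂) f₃ = mul f₁ (mul f₂ f₃)) ∧
    K 0 ∧
    (∀ f, mul f 0 = f ∧ mul 0 f = f) ∧
    (∀ f, K f → K (inv f) ∧ mul f (inv f) = 0 ∧ mul (inv f) f = 0) := by
  have key : ∀ f₁ f₂ : B →ₗ[ℝ] C,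
      (1 : Module.End ℝ B) + ρ ∘ₗ (mul f₁ f₂) =
      ((1 : Module.End ℝ B) + ρ ∘ₗ f₂) * ((1 : Module.End ℝ B) + ρ ∘ₗ f₁) := by
    intro f₁ f₂
    simp only [hmul, mul_add, add_mul, mul_one, one_mul, Module.End.mul_eq_comp,
      LinearMap.comp_add, LinearMap.add_comp, LinearMap.comp_assoc]
    abel
  refine ⟨?_, ?_, ?_, ?_, ?_⟩
  · intro f₁ f₂ h1 h2
    rw [hK, key]
    exact ((hK f₂).mp h2).mul ((hK f₁).mp h1)
  · intro f₁ f₂ f₃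
    simp only [hmul, LinearMap.comp_add, LinearMap.add_comp, LinearMap.comp_assoc]
    abel
  · rw [hK]; simp
  · intro f
    constructor <;> simp [hmul]
  · intro f hf
    have hu := (hK f).mp hf
    have huv : ((1 : Module.End ℝ B) + ρ ∘ₗ f) *
        Ring.inverse ((1 : Module.End ℝ B) + ρ ∘ₗ f) = 1 := Ring.mul_inverse_cancel _ hu
    have hvu : Ring.inverse ((1 : Module.End ℝ B) + ρ ∘ₗ f) *
        ((1 : Module.End ℝ B) + ρ ∘ₗ f) = 1 := Ring.inverse_mul_cancel _ hu
    have hBx : ∀ x, ρ (f (Ring.inverse ((1 : Module.End ℝ B) + ρ ∘ₗ f) x)) =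
        x - Ring.inverse ((1 : Module.End ℝ B) + ρ ∘ₗ f) x := by
      intro x
      have h := LinearMap.congr_fun huv x
      simp only [Module.End.mul_apply, LinearMap.add_apply, Module.End.one_apply,
        LinearMap.comp_apply] at h
      rw [eq_sub_iff_add_eq']; exact h
    have hAx : ∀ x, Ring.inverse ((1 : Module.End ℝ B) + ρ ∘ₗ f) (ρ (f x)) =
        x - Ring.inverse ((1 : Module.End ℝ B) + ρ ∘ₗ f) x := by
      intro x
      have h := LinearMap.congr_fun hvu x
      simp only [Module.End.mul_apply, LinearMap.add_apply, Module.End.one_apply,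
        LinearMap.comp_apply, map_add] at h
      rw [eq_sub_iff_add_eq']; exact h
    have hinvkey : (1 : Module.End ℝ B) + ρ ∘ₗ (inv f) =
        Ring.inverse ((1 : Module.End ℝ B) + ρ ∘ₗ f) := by
      apply LinearMap.ext; intro x
      rw [hinv f]
      simp only [LinearMap.add_apply, Module.End.one_apply, LinearMap.comp_apply,
        LinearMap.neg_apply, map_neg, hBx]
      abel
    have hKinv : K (inv f) := by
      rw [hK, hinvkey, ← hu.unit_spec, Ring.inverse_unit]
      exact Units.isUnit _
    refine ⟨hKinv, ?_, ?_⟩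
    · apply LinearMap.ext; intro x
      rw [hmul, hinv f]
      simp only [LinearMap.add_apply, LinearMap.comp_apply, LinearMap.neg_apply,
        LinearMap.zero_apply, hAx, map_sub]
      abel
    · apply LinearMap.ext; intro x
      rw [hmul, hinv f]
      simp only [LinearMap.add_apply, LinearMap.comp_apply, LinearMap.neg_apply,
        LinearMap.zero_apply, map_neg, hBx, map_sub]
      abel
end

section
/- With K as above, the assignment f ↦ Ad^C_f := (id_C + f∘ρ)⁻¹ is a group homomorphism from K to GL(C), and it satisfies the intertwining relation ρ ∘ Ad^C_f = Ad^B_f ∘ ρ for all f ∈ K. -/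
private lemma aux_isUnit {B C : Type*} [AddCommGroup B] [Module ℝ B]
    [AddCommGroup C] [Module ℝ C]
    (ρ : C →ₗ[ℝ] B) (f : B →ₗ[ℝ] C)
    (h : IsUnit ((1 : Module.End ℝ B) + ρ ∘ₗ f)) :
    IsUnit ((1 : Module.End ℝ C) + f ∘ₗ ρ) := by
  set u := h.unit with hu
  have hspec : (u : Module.End ℝ B) = 1 + ρ ∘ₗ f := h.unit_spec
  have hv1 : ∀ y : B, (↑u⁻¹ : Module.End ℝ B) y + ρ (f ((↑u⁻¹ : Module.End ℝ B) y)) = y := by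
    intro y
    have := congrFun (congrArg (DFunLike.coe) (u.mul_inv)) y
    simpa [hspec, Module.End.mul_apply] using this
  have hv2 : ∀ y : B, (↑u⁻¹ : Module.End ℝ B) (y + ρ (f y)) = y := by
    intro y
    have := congrFun (congrArg (DFunLike.coe) (u.inv_mul)) y
    simpa [hspec, Module.End.mul_apply] using this
  rw [isUnit_iff_exists]
  refine ⟨(1 : Module.End ℝ C) - f ∘ₗ (↑u⁻¹ : Module.End ℝ B) ∘ₗ ρ, ?_, ?_⟩
  · apply LinearMap.ext; intro x
    have h1 := congrArg f (hv1 (ρ x))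
    simp only [map_add] at h1
    simp only [Module.End.mul_apply, LinearMap.sub_apply, LinearMap.add_apply,
      Module.End.one_apply, LinearMap.comp_apply, map_sub, map_add]
    rw [← h1]
    abel
  · apply LinearMap.ext; intro x
    have key : (↑u⁻¹ : Module.End ℝ B) (ρ x) + (↑u⁻¹ : Module.End ℝ B) (ρ (f (ρ x))) = ρ x := by
      rw [← map_add, hv2]
    have key2 := congrArg f key
    rw [map_add] at key2
    simp only [Module.End.mul_apply, LinearMap.sub_apply, LinearMap.add_apply,
      Module.End.one_apply, LinearMap.comp_apply, map_sub, map_add]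
    nth_rewrite 1 [← key2]
    abel

/-- With `K` as above, `f ↦ Ad^C_f = (id_C + f∘ρ)⁻¹` is well defined
(i.e. `id_C + f∘ρ` is invertible for `f ∈ K`), is a group homomorphism from `K` to `GL(C)`,
and satisfies the intertwining relation `ρ ∘ Ad^C_f = Ad^B_f ∘ ρ`. -/
theorem AdC_group_hom_intertwine {B C : Type*} [AddCommGroup B] [Module ℝ B]
    [AddCommGroup C] [Module ℝ C] [FiniteDimensional ℝ B] [FiniteDimensional ℝ C]
    (ρ : C →ₗ[ℝ] B)
    (AdB : (B →ₗ[ℝ] C) → Module.End ℝ B)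
    (hAdB : ∀ f, AdB f = Ring.inverse ((1 : Module.End ℝ B) + ρ ∘ₗ f))
    (AdC : (B →ₗ[ℝ] C) → Module.End ℝ C)
    (hAdC : ∀ f, AdC f = Ring.inverse ((1 : Module.End ℝ C) + f ∘ₗ ρ)) :
    (∀ f : B →ₗ[ℝ] C, IsUnit ((1 : Module.End ℝ B) + ρ ∘ₗ f) →
      IsUnit ((1 : Module.End ℝ C) + f ∘ₗ ρ) ∧
      IsUnit (AdC f) ∧
      ρ ∘ₗ (AdC f : C →ₗ[ℝ] C) = (AdB f : B →ₗ[ℝ] B) ∘ₗ ρ) ∧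
    (∀ f₁ f₂ : B →ₗ[ℝ] C,
      IsUnit ((1 : Module.End ℝ B) + ρ ∘ₗ f₁) →
      IsUnit ((1 : Module.End ℝ B) + ρ ∘ₗ f₂) →
      AdC (f₁ + f₂ + f₂ ∘ₗ (ρ ∘ₗ f₁)) = AdC f₁ * AdC f₂) := by
  constructor
  · intro f hB
    have hC : IsUnit ((1 : Module.End ℝ C) + f ∘ₗ ρ) := aux_isUnit ρ f hB
    refine ⟨hC, ?_, ?_⟩
    · rw [hAdC, ← hC.unit_spec, Ring.inverse_unit]
      exact Units.isUnit _
    · rw [hAdC, hAdB, ← hC.unit_spec, ← hB.unit_spec, Ring.inverse_unit, Ring.inverse_unit]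
      set u := hB.unit
      set w := hC.unit
      have hus : (u : Module.End ℝ B) = 1 + ρ ∘ₗ f := hB.unit_spec
      have hws : (w : Module.End ℝ C) = 1 + f ∘ₗ ρ := hC.unit_spec
      apply LinearMap.ext; intro x
      -- from w * w⁻¹ = 1 : w⁻¹ x + f (ρ (w⁻¹ x)) = x
      have h1 : (↑w⁻¹ : Module.End ℝ C) x + f (ρ ((↑w⁻¹ : Module.End ℝ C) x)) = x := by
        have := congrFun (congrArg (DFunLike.coe) (w.mul_inv)) x
        simpa [hws, Module.End.mul_apply] using this
      -- apply ρ
      have h2 : ρ ((↑w⁻¹ : Module.End ℝ C) x) + ρ (f (ρ ((↑w⁻¹ : Module.End ℝ C) x))) = ρ x := by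
        rw [← map_add, h1]
      -- u⁻¹ ∘ u = 1
      have h3 : ∀ y : B, (↑u⁻¹ : Module.End ℝ B) (y + ρ (f y)) = y := by
        intro y
        have := congrFun (congrArg (DFunLike.coe) (u.inv_mul)) y
        simpa [hus, Module.End.mul_apply] using this
      have h4 := congrArg (↑u⁻¹ : Module.End ℝ B) h2
      rw [h3] at h4
      simpa using h4
  · intro f₁ f₂ h1 h2
    have hC1 : IsUnit ((1 : Module.End ℝ C) + f₁ ∘ₗ ρ) := aux_isUnit ρ f₁ h1
    have hC2 : IsUnit ((1 : Module.End ℝ C) + f₂ ∘ₗ ρ) := aux_isUnit ρ f₂ h2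
    have hfact : (1 : Module.End ℝ C) + (f₁ + f₂ + f₂ ∘ₗ (ρ ∘ₗ f₁)) ∘ₗ ρ
        = ((1 : Module.End ℝ C) + f₂ ∘ₗ ρ) * ((1 : Module.End ℝ C) + f₁ ∘ₗ ρ) := by
      apply LinearMap.ext; intro x
      simp only [Module.End.mul_apply, LinearMap.add_apply, Module.End.one_apply,
        LinearMap.comp_apply, map_add]
      abel
    rw [hAdC, hAdC, hAdC, hfact, ← hC1.unit_spec, ← hC2.unit_spec, ← Units.val_mul,
      Ring.inverse_unit, Ring.inverse_unit, Ring.inverse_unit, mul_inv_rev, Units.val_mul]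
end

section
/- Linear algebra version of backward images: Let E₁, E₂ be finite-dimensional vector spaces with nondegenerate symmetric bilinear forms, A_i ⊆ E_i Lagrangian subspaces, and R ⊆ E₂ × E₁ a Lagrangian subspace (for the difference form) satisfying R(A₁) ⊆ A₂ and R⁻¹(0) ∩ A₁ = 0, where R(A₁) = {x₂ | ∃x₁ ∈ A₁, (x₂,x₁) ∈ R} and R⁻¹(S) = {x₁ | ∃x₂ ∈ S, (x₂,x₁) ∈ R}. If B₂ ⊆ E₂ is a Lagrangian subspace with E₂ = A₂ ⊕ B₂, then B₁ := R⁻¹(B₂) is a Lagrangian subspace of E₁ with E₁ = A₁ ⊕ B₁. -/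
/-- A subspace is Lagrangian for a bilinear form if it coincides with its orthogonal. -/
def IsLagrangian {V : Type*} [AddCommGroup V] [Module ℝ V]
    (Φ : V →ₗ[ℝ] V →ₗ[ℝ] ℝ) (L : Submodule ℝ V) : Prop :=
  ∀ x, x ∈ L ↔ ∀ y ∈ L, Φ x y = 0

/-! With `nᵢ = dim Eᵢ`: the Lagrangian `R` has dimension `(n₂ + n₁)/2` and `B₂ × E₁` has
dimension `n₂/2 + n₁`, so they meet in dimension at least `n₁/2`. The projection to `E₁` is
injective on this intersection because `R(0) ⊆ A₂` meets `B₂` only in `0`, so `R⁻¹(B₂)` has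
dimension at least `n₁/2`. It is isotropic (`B₁(x₁, y₁) = B₂(x₂, y₂) = 0`), hence Lagrangian,
and `R⁻¹(0) ∩ A₁ = 0` makes it disjoint from `A₁`. -/

open Module LinearMap.BilinForm

namespace Submodule

theorem finrank_prod {K M N : Type*} [DivisionRing K] [AddCommGroup M] [Module K M]
    [AddCommGroup N] [Module K N] [FiniteDimensional K M] [FiniteDimensional K N]
    (p : Submodule K M) (q : Submodule K N) :
    finrank K (p.prod q) = finrank K p + finrank K q := by
  let e : (p × q) ≃ₗ[K] p.prod q :=
    { toFun := fun x => ⟨(x.1, x.2), x.1.2, x.2.2⟩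
      map_add' := fun _ _ => rfl
      map_smul' := fun _ _ => rfl
      invFun := fun z => (⟨z.1.1, z.2.1⟩, ⟨z.1.2, z.2.2⟩)
      left_inv := fun _ => rfl
      right_inv := fun _ => rfl }
  rw [← e.finrank_eq, Module.finrank_prod]

end Submodule

section Lagrangian

variable {V : Type*} [AddCommGroup V] [Module ℝ V] {B : LinearMap.BilinForm ℝ V} {L : Submodule ℝ V}

theorem isLagrangian_iff_orthogonal_eq (hB : B.IsRefl) :
    IsLagrangian B L ↔ B.orthogonal L = L := by
  rw [SetLike.ext_iff]
  exact forall_congr' fun x =>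
    (iff_congr Iff.rfl (forall₂_congr fun y _ => hB.eq_iff)).trans Iff.comm

variable [FiniteDimensional ℝ V]

theorem IsLagrangian.two_mul_finrank (hB : B.IsRefl) (hnd : B.Nondegenerate)
    (hL : IsLagrangian B L) : 2 * finrank ℝ L = finrank ℝ V := by
  have h := finrank_orthogonal hnd L
  rw [(isLagrangian_iff_orthogonal_eq hB).1 hL] at h
  have := L.finrank_le
  omega

theorem isLagrangian_of_le_orthogonal (hB : B.IsRefl) (hnd : B.Nondegenerate)
    (hiso : L ≤ B.orthogonal L) (hdim : finrank ℝ V ≤ 2 * finrank ℝ L) :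
    IsLagrangian B L := by
  refine (isLagrangian_iff_orthogonal_eq hB).2 (Submodule.eq_of_le_of_finrank_le hiso ?_).symm
  rw [finrank_orthogonal hnd]
  omega

end Lagrangian

section DifferenceForm

variable {K E₁ E₂ : Type*} [CommRing K] [AddCommGroup E₁] [Module K E₁]
  [AddCommGroup E₂] [Module K E₂] {B₁ : LinearMap.BilinForm K E₁} {B₂ : LinearMap.BilinForm K E₂}

def diffForm (B₂ : LinearMap.BilinForm K E₂) (B₁ : LinearMap.BilinForm K E₁) :
    LinearMap.BilinForm K (E₂ × E₁) :=
  B₂.compl₁₂ (LinearMap.fst K E₂ E₁) (LinearMap.fst K E₂ E₁) -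
    B₁.compl₁₂ (LinearMap.snd K E₂ E₁) (LinearMap.snd K E₂ E₁)

@[simp]
theorem diffForm_apply (z w : E₂ × E₁) : diffForm B₂ B₁ z w = B₂ z.1 w.1 - B₁ z.2 w.2 := rfl

theorem diffForm_isSymm (h₂ : LinearMap.IsSymm B₂) (h₁ : LinearMap.IsSymm B₁) :
    LinearMap.IsSymm (diffForm B₂ B₁) :=
  ⟨fun z w => by simp [← h₂.eq z.1 w.1, ← h₁.eq z.2 w.2]⟩

theorem diffForm_separatingLeft (h₂ : B₂.SeparatingLeft) (h₁ : B₁.SeparatingLeft) :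
    (diffForm B₂ B₁).SeparatingLeft := by
  intro z hz
  exact Prod.ext (h₂ z.1 fun y => by simpa using hz (y, 0))
    (h₁ z.2 fun y => by simpa using hz (0, y))

end DifferenceForm

section BackwardImage

variable {K E₁ E₂ : Type*} [CommRing K] [AddCommGroup E₁] [Module K E₁]
  [AddCommGroup E₂] [Module K E₂]

/-- The paper's `R⁻¹(S)`. -/
def backwardImage (R : Submodule K (E₂ × E₁)) (S : Submodule K E₂) : Submodule K E₁ :=
  (R ⊓ S.comap (LinearMap.fst K E₂ E₁)).map (LinearMap.snd K E₂ E₁)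

variable {R : Submodule K (E₂ × E₁)} {S : Submodule K E₂}

theorem mem_backwardImage {x₁ : E₁} : x₁ ∈ backwardImage R S ↔ ∃ x₂ ∈ S, (x₂, x₁) ∈ R := by
  constructor
  · rintro ⟨⟨x₂, x₁⟩, ⟨hR, hS⟩, rfl⟩
    exact ⟨x₂, hS, hR⟩
  · rintro ⟨x₂, hS, hR⟩
    exact ⟨(x₂, x₁), ⟨hR, hS⟩, rfl⟩

theorem backwardImage_le_orthogonal {B₁ : LinearMap.BilinForm K E₁}
    {B₂ : LinearMap.BilinForm K E₂}
    (hR : R ≤ (diffForm B₂ B₁).orthogonal R) (hS : S ≤ B₂.orthogonal S) :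
    backwardImage R S ≤ B₁.orthogonal (backwardImage R S) := by
  intro x hx y hy
  obtain ⟨x₂, hx₂, hxR⟩ := mem_backwardImage.1 hx
  obtain ⟨y₂, hy₂, hyR⟩ := mem_backwardImage.1 hy
  have hdiff : B₂ y₂ x₂ - B₁ y x = 0 := hR hxR (y₂, y) hyR
  rwa [hS hx₂ y₂ hy₂, zero_sub, neg_eq_zero] at hdiff

theorem disjoint_backwardImage {A₁ : Submodule K E₁} {A₂ : Submodule K E₂}
    (hRA : ∀ x₂ x₁, (x₂, x₁) ∈ R → x₁ ∈ A₁ → x₂ ∈ A₂)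
    (hker : ∀ x₁ ∈ A₁, ((0 : E₂), x₁) ∈ R → x₁ = 0) (hAS : Disjoint A₂ S) :
    Disjoint A₁ (backwardImage R S) := by
  refine Submodule.disjoint_def.2 fun x hxA hx => ?_
  obtain ⟨x₂, hx₂, hxR⟩ := mem_backwardImage.1 hx
  obtain rfl : x₂ = 0 := Submodule.disjoint_def.1 hAS x₂ (hRA x₂ x hxR hxA) hx₂
  exact hker x hxA hxR

end BackwardImage

section Dimension

variable {K E₁ E₂ : Type*} [Field K] [AddCommGroup E₁] [Module K E₁]
  [AddCommGroup E₂] [Module K E₂] {R : Submodule K (E₂ × E₁)} {S : Submodule K E₂}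

theorem finrank_backwardImage (hS : ∀ x₂ ∈ S, (x₂, (0 : E₁)) ∈ R → x₂ = 0) :
    finrank K (backwardImage R S) = finrank K ↥(R ⊓ S.comap (LinearMap.fst K E₂ E₁)) := by
  set W := R ⊓ S.comap (LinearMap.fst K E₂ E₁)
  have hinj : Function.Injective ((LinearMap.snd K E₂ E₁).comp W.subtype) := by
    rw [← LinearMap.ker_eq_bot, LinearMap.ker_eq_bot']
    rintro ⟨⟨x₂, x₁⟩, hR, hS₂⟩ (rfl : x₁ = 0)
    obtain rfl := hS x₂ hS₂ hR
    rfl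
  rw [← LinearMap.finrank_range_of_inj hinj, LinearMap.range_comp, Submodule.range_subtype]
  rfl

theorem finrank_add_finrank_le_finrank_backwardImage [FiniteDimensional K E₁]
    [FiniteDimensional K E₂] (hS : ∀ x₂ ∈ S, (x₂, (0 : E₁)) ∈ R → x₂ = 0) :
    finrank K R + finrank K S ≤ finrank K E₂ + finrank K (backwardImage R S) := by
  have hsup := Submodule.finrank_sup_add_finrank_inf_eq R (S.comap (LinearMap.fst K E₂ E₁))
  have hle := (R ⊔ S.comap (LinearMap.fst K E₂ E₁)).finrank_le
  rw [Submodule.comap_fst] at hsup hle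
  rw [Submodule.finrank_prod, finrank_top] at hsup
  rw [Module.finrank_prod] at hle
  rw [finrank_backwardImage hS, Submodule.comap_fst]
  omega

end Dimension

theorem backward_image_lagrangian_complement_general {E₁ E₂ : Type*}
    [AddCommGroup E₁] [Module ℝ E₁] [AddCommGroup E₂] [Module ℝ E₂]
    [FiniteDimensional ℝ E₁] [FiniteDimensional ℝ E₂]
    (B₁ : E₁ →ₗ[ℝ] E₁ →ₗ[ℝ] ℝ) (B₂ : E₂ →ₗ[ℝ] E₂ →ₗ[ℝ] ℝ)
    (hsymm₁ : ∀ x y, B₁ x y = B₁ y x) (hsymm₂ : ∀ x y, B₂ x y = B₂ y x)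
    (hnd₁ : ∀ x, (∀ y, B₁ x y = 0) → x = 0) (hnd₂ : ∀ x, (∀ y, B₂ x y = 0) → x = 0)
    (A₁ : Submodule ℝ E₁) (A₂ : Submodule ℝ E₂)
    (hA₁ : IsLagrangian B₁ A₁)
    (R : Submodule ℝ (E₂ × E₁))
    (hR : IsLagrangian
      ((B₂.compl₁₂ (LinearMap.fst ℝ E₂ E₁) (LinearMap.fst ℝ E₂ E₁)) -
        (B₁.compl₁₂ (LinearMap.snd ℝ E₂ E₁) (LinearMap.snd ℝ E₂ E₁))) R)
    (hRA : ∀ x₂ x₁, (x₂, x₁) ∈ R → x₁ ∈ A₁ → x₂ ∈ A₂)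
    (hker : ∀ x₁ ∈ A₁, ((0 : E₂), x₁) ∈ R → x₁ = 0)
    (Bsub : Submodule ℝ E₂) (hBsub : IsLagrangian B₂ Bsub)
    (hcompl : IsCompl A₂ Bsub) :
    IsLagrangian B₁
        (Submodule.map (LinearMap.snd ℝ E₂ E₁)
          (R ⊓ Submodule.comap (LinearMap.fst ℝ E₂ E₁) Bsub)) ∧
      IsCompl A₁
        (Submodule.map (LinearMap.snd ℝ E₂ E₁)
          (R ⊓ Submodule.comap (LinearMap.fst ℝ E₂ E₁) Bsub)) := by
  show IsLagrangian B₁ (backwardImage R Bsub) ∧ IsCompl A₁ (backwardImage R Bsub)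
  have hs₁ : B₁.IsSymm := ⟨hsymm₁⟩
  have hs₂ : B₂.IsSymm := ⟨hsymm₂⟩
  have hsΦ := diffForm_isSymm hs₂ hs₁
  have hnd₁' := hs₁.isRefl.nondegenerate_iff_separatingLeft.2 hnd₁
  have hnd₂' := hs₂.isRefl.nondegenerate_iff_separatingLeft.2 hnd₂
  have hndΦ := hsΦ.isRefl.nondegenerate_iff_separatingLeft.2 (diffForm_separatingLeft hnd₂ hnd₁)
  have hdimA₁ := hA₁.two_mul_finrank hs₁.isRefl hnd₁'
  have hdimB := hBsub.two_mul_finrank hs₂.isRefl hnd₂'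
  have hdimR := hR.two_mul_finrank hsΦ.isRefl hndΦ
  rw [Module.finrank_prod] at hdimR
  have hBR : ∀ x₂ ∈ Bsub, (x₂, (0 : E₁)) ∈ R → x₂ = 0 := fun x₂ hx₂ hR₀ =>
    Submodule.disjoint_def.1 hcompl.disjoint x₂ (hRA x₂ 0 hR₀ A₁.zero_mem) hx₂
  have hdimL := finrank_add_finrank_le_finrank_backwardImage hBR
  have hLag : IsLagrangian B₁ (backwardImage R Bsub) :=
    isLagrangian_of_le_orthogonal hs₁.isRefl hnd₁'
      (backwardImage_le_orthogonal ((isLagrangian_iff_orthogonal_eq hsΦ.isRefl).1 hR).ge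
        ((isLagrangian_iff_orthogonal_eq hs₂.isRefl).1 hBsub).ge)
      (by omega)
  exact ⟨hLag, (Submodule.isCompl_iff_disjoint _ _ (by omega)).2
    (disjoint_backwardImage hRA hker hcompl.disjoint)⟩

/-- Backward images of Lagrangian complements under a linear morphism of
Manin pairs: if `R ⊆ E₂ × E₁` is Lagrangian for the difference form, `R(A₁) ⊆ A₂`,
`R⁻¹(0) ∩ A₁ = 0`, and `B₂` is a Lagrangian complement to `A₂`, then `B₁ = R⁻¹(B₂)` is a
Lagrangian complement to `A₁`. -/
theorem backward_image_lagrangian_complement {E₁ E₂ : Type*}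
    [AddCommGroup E₁] [Module ℝ E₁] [AddCommGroup E₂] [Module ℝ E₂]
    [FiniteDimensional ℝ E₁] [FiniteDimensional ℝ E₂]
    (B₁ : E₁ →ₗ[ℝ] E₁ →ₗ[ℝ] ℝ) (B₂ : E₂ →ₗ[ℝ] E₂ →ₗ[ℝ] ℝ)
    (hsymm₁ : ∀ x y, B₁ x y = B₁ y x) (hsymm₂ : ∀ x y, B₂ x y = B₂ y x)
    (hnd₁ : ∀ x, (∀ y, B₁ x y = 0) → x = 0) (hnd₂ : ∀ x, (∀ y, B₂ x y = 0) → x = 0)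
    (A₁ : Submodule ℝ E₁) (A₂ : Submodule ℝ E₂)
    (hA₁ : IsLagrangian B₁ A₁) (hA₂ : IsLagrangian B₂ A₂)
    (R : Submodule ℝ (E₂ × E₁))
    (hR : IsLagrangian
      ((B₂.compl₁₂ (LinearMap.fst ℝ E₂ E₁) (LinearMap.fst ℝ E₂ E₁)) -
        (B₁.compl₁₂ (LinearMap.snd ℝ E₂ E₁) (LinearMap.snd ℝ E₂ E₁))) R)
    (hRA : ∀ x₂ x₁, (x₂, x₁) ∈ R → x₁ ∈ A₁ → x₂ ∈ A₂)
    (hker : ∀ x₁ ∈ A₁, ((0 : E₂), x₁) ∈ R → x₁ = 0)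
    (Bsub : Submodule ℝ E₂) (hBsub : IsLagrangian B₂ Bsub)
    (hcompl : IsCompl A₂ Bsub) :
    IsLagrangian B₁
        (Submodule.map (LinearMap.snd ℝ E₂ E₁)
          (R ⊓ Submodule.comap (LinearMap.fst ℝ E₂ E₁) Bsub)) ∧
      IsCompl A₁
        (Submodule.map (LinearMap.snd ℝ E₂ E₁)
          (R ⊓ Submodule.comap (LinearMap.fst ℝ E₂ E₁) Bsub)) :=
  backward_image_lagrangian_complement_general B₁ B₂ hsymm₁ hsymm₂ hnd₁ hnd₂ A₁ A₂ hA₁ R hR hRA hker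
    Bsub hBsub hcompl
end

section
/- Let B, C be finite-dimensional real vector spaces, ρ : C → B linear, and K the group {f ∈ Hom(B,C) | id_B + ρ∘f invertible}. Define the left action of f ∈ K on C ⊕ B by l_f(c,b) = (c + Ad^C_f(f(b)), Ad^B_f(b)) where Ad^B_f = (id_B + ρ∘f)⁻¹ and Ad^C_f = (id_C + f∘ρ)⁻¹. Then l is a group action: l_{f₁ * f₂} = l_{f₁} ∘ l_{f₂} for the product f₁ * f₂ = f₁ + f₂ + f₂∘ρ∘f₁, and it satisfies t(l_f(c,b)) = Ad^B_f(t(c,b)) and s(l_f(c,b)) = s(c,b), where t(c,b) = b and s(c,b) = b + ρ(c). -/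
section Aux

variable {B C : Type*} [AddCommGroup B] [Module ℝ B] [AddCommGroup C] [Module ℝ C]

private lemma aux_AB1 (ρ : C →ₗ[ℝ] B) (f : B →ₗ[ℝ] C)
    (hu : IsUnit ((1 : Module.End ℝ B) + ρ ∘ₗ f)) (b : B) :
    Ring.inverse ((1 : Module.End ℝ B) + ρ ∘ₗ f) b
      + ρ (f (Ring.inverse ((1 : Module.End ℝ B) + ρ ∘ₗ f) b)) = b := by
  have h := Ring.mul_inverse_cancel _ hu
  have h2 := LinearMap.congr_fun h b
  simpa [Module.End.mul_apply, LinearMap.add_apply, Module.End.one_apply,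
    LinearMap.comp_apply] using h2

private lemma aux_AB2 (ρ : C →ₗ[ℝ] B) (f : B →ₗ[ℝ] C)
    (hu : IsUnit ((1 : Module.End ℝ B) + ρ ∘ₗ f)) (b : B) :
    Ring.inverse ((1 : Module.End ℝ B) + ρ ∘ₗ f) (b + ρ (f b)) = b := by
  have h := Ring.inverse_mul_cancel _ hu
  have h2 := LinearMap.congr_fun h b
  simpa [Module.End.mul_apply, LinearMap.add_apply, Module.End.one_apply,
    LinearMap.comp_apply] using h2

private lemma aux_unitC (ρ : C →ₗ[ℝ] B) (f : B →ₗ[ℝ] C)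
    (hu : IsUnit ((1 : Module.End ℝ B) + ρ ∘ₗ f)) :
    IsUnit ((1 : Module.End ℝ C) + f ∘ₗ ρ) := by
  set A := Ring.inverse ((1 : Module.End ℝ B) + ρ ∘ₗ f) with hA
  refine isUnit_iff_exists.mpr ⟨(1 : Module.End ℝ C) - f ∘ₗ (A ∘ₗ ρ), ?_, ?_⟩
  · ext c
    have hf := congrArg f (aux_AB1 ρ f hu (ρ c))
    rw [map_add] at hf
    simp only [Module.End.mul_apply, LinearMap.add_apply, LinearMap.sub_apply,
      Module.End.one_apply, LinearMap.comp_apply, map_sub, ← hA]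
    rw [← hf]
    abel
  · ext c
    have h2 : A (ρ c + ρ (f (ρ c))) = ρ c := aux_AB2 ρ f hu (ρ c)
    simp only [Module.End.mul_apply, LinearMap.add_apply, LinearMap.sub_apply,
      Module.End.one_apply, LinearMap.comp_apply, ← hA]
    rw [map_add ρ c (f (ρ c)), h2]
    abel

private lemma aux_AC (ρ : C →ₗ[ℝ] B) (f : B →ₗ[ℝ] C)
    (hu : IsUnit ((1 : Module.End ℝ B) + ρ ∘ₗ f)) (b : B) :
    Ring.inverse ((1 : Module.End ℝ C) + f ∘ₗ ρ) (f b)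
      = f (Ring.inverse ((1 : Module.End ℝ B) + ρ ∘ₗ f) b) := by
  set A := Ring.inverse ((1 : Module.End ℝ B) + ρ ∘ₗ f) with hA
  have huC := aux_unitC ρ f hu
  have hC2 : ∀ c, Ring.inverse ((1 : Module.End ℝ C) + f ∘ₗ ρ) (c + f (ρ c)) = c := by
    intro c
    have h := Ring.inverse_mul_cancel _ huC
    have h2 := LinearMap.congr_fun h c
    simpa [Module.End.mul_apply, LinearMap.add_apply, Module.End.one_apply,
      LinearMap.comp_apply] using h2
  have hf : f b = f (A b) + f (ρ (f (A b))) := by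
    have := congrArg f (aux_AB1 ρ f hu b)
    rw [map_add] at this
    exact this.symm
  rw [hf]
  exact hC2 (f (A b))

end Aux

/-- The left translation action of `K = {f | id_B + ρ∘f invertible}` on
`C ⊕ B`, `l_f(c,b) = (c + Ad^C_f(f(b)), Ad^B_f(b))`, is a group action:
`l_{f₁ * f₂} = l_{f₁} ∘ l_{f₂}` for the product `f₁ * f₂ = f₁ + f₂ + f₂∘ρ∘f₁`, and it
satisfies `t(l_f(c,b)) = Ad^B_f(t(c,b))` and `s(l_f(c,b)) = s(c,b)`, where `t(c,b) = b`
and `s(c,b) = b + ρ(c)`. -/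
theorem left_translation_action {B C : Type*} [AddCommGroup B] [Module ℝ B]
    [AddCommGroup C] [Module ℝ C] [FiniteDimensional ℝ B] [FiniteDimensional ℝ C]
    (ρ : C →ₗ[ℝ] B)
    (AdB : (B →ₗ[ℝ] C) → Module.End ℝ B)
    (hAdB : ∀ f, AdB f = Ring.inverse ((1 : Module.End ℝ B) + ρ ∘ₗ f))
    (AdC : (B →ₗ[ℝ] C) → Module.End ℝ C)
    (hAdC : ∀ f, AdC f = Ring.inverse ((1 : Module.End ℝ C) + f ∘ₗ ρ))
    (l : (B →ₗ[ℝ] C) → C × B → C × B)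
    (hl : ∀ f cb, l f cb = (cb.1 + AdC f (f cb.2), AdB f cb.2)) :
    (∀ f₁ f₂ : B →ₗ[ℝ] C,
      IsUnit ((1 : Module.End ℝ B) + ρ ∘ₗ f₁) →
      IsUnit ((1 : Module.End ℝ B) + ρ ∘ₗ f₂) →
      l (f₁ + f₂ + f₂ ∘ₗ (ρ ∘ₗ f₁)) = l f₁ ∘ l f₂) ∧
    (∀ f : B →ₗ[ℝ] C, IsUnit ((1 : Module.End ℝ B) + ρ ∘ₗ f) → ∀ cb : C × B,
      (l f cb).2 = AdB f cb.2 ∧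
      (l f cb).2 + ρ ((l f cb).1) = cb.2 + ρ cb.1) := by
  constructor
  · intro f₁ f₂ hu₁ hu₂
    funext cb
    obtain ⟨c, b⟩ := cb
    set g : B →ₗ[ℝ] C := f₁ + f₂ + f₂ ∘ₗ (ρ ∘ₗ f₁) with hg
    set A₁ := Ring.inverse ((1 : Module.End ℝ B) + ρ ∘ₗ f₁) with hA₁
    set A₂ := Ring.inverse ((1 : Module.End ℝ B) + ρ ∘ₗ f₂) with hA₂
    have hprod : (1 : Module.End ℝ B) + ρ ∘ₗ g
        = ((1 : Module.End ℝ B) + ρ ∘ₗ f₂) * ((1 : Module.End ℝ B) + ρ ∘ₗ f₁) := by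
      ext x
      simp only [hg, Module.End.mul_apply, LinearMap.add_apply, Module.End.one_apply,
        LinearMap.comp_apply, map_add]
      abel
    have hug : IsUnit ((1 : Module.End ℝ B) + ρ ∘ₗ g) := by
      rw [hprod]; exact hu₂.mul hu₁
    -- key: inverse of product
    have key : Ring.inverse ((1 : Module.End ℝ B) + ρ ∘ₗ g) b = A₁ (A₂ b) := by
      have h1 : ((1 : Module.End ℝ B) + ρ ∘ₗ g) (A₁ (A₂ b)) = b := by
        rw [hprod, Module.End.mul_apply]
        have e1 : ((1 : Module.End ℝ B) + ρ ∘ₗ f₁) (A₁ (A₂ b)) = A₂ b := by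
          simpa [LinearMap.add_apply, Module.End.one_apply, LinearMap.comp_apply, ← hA₁]
            using aux_AB1 ρ f₁ hu₁ (A₂ b)
        rw [e1]
        simpa [LinearMap.add_apply, Module.End.one_apply, LinearMap.comp_apply, ← hA₂]
          using aux_AB1 ρ f₂ hu₂ b
      conv_lhs => rw [← h1]
      have h2 := Ring.inverse_mul_cancel _ hug
      have h3 := LinearMap.congr_fun h2 (A₁ (A₂ b))
      simpa [Module.End.mul_apply] using h3
    have hgb : g (A₁ (A₂ b)) = f₂ (A₂ b) + f₁ (A₁ (A₂ b)) := by
      have h4 : A₁ (A₂ b) + ρ (f₁ (A₁ (A₂ b))) = A₂ b := aux_AB1 ρ f₁ hu₁ (A₂ b)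
      have : f₂ (A₁ (A₂ b) + ρ (f₁ (A₁ (A₂ b)))) = f₂ (A₂ b) := congrArg f₂ h4
      rw [map_add] at this
      simp only [hg, LinearMap.add_apply, LinearMap.comp_apply]
      rw [← this]
      abel
    simp only [Function.comp_apply, hl, hAdB, hAdC]
    refine Prod.ext ?_ ?_
    · simp only
      rw [aux_AC ρ g hug, aux_AC ρ f₂ hu₂, aux_AC ρ f₁ hu₁, ← hA₁, ← hA₂, key, hgb]
      abel
    · simp only
      rw [key]
  · intro f hu cb
    obtain ⟨c, b⟩ := cb
    refine ⟨by rw [hl], ?_⟩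
    rw [hl]
    simp only
    rw [hAdC, hAdB, aux_AC ρ f hu, map_add]
    conv_rhs => rw [← aux_AB1 ρ f hu b]
    abel
end
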